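/- Consider a positive recurrent level-independent QBD process with generator blocks B₁, B₀, B₂, A₀, A₁, A₂, stationary vector x = (x₀, x₁, x₂, …) with x_k = x₁R^{k−1} for k ≥ 2, where R solves A₀ + RA₁ + R²A₂ = 0 with sp(R) < 1. Define π_k = Σ_{j≥k} x_j and Φ₀ = (A₀ + A₁) + RA₂. If Φ₀ is invertible, then the identity x₀B₀(−Φ₀^{−1}) = x₁(I − R)^{−1} holds, equivalently x₁ = x₀B₀(−Φ₀^{−1})(I − R). -/
import Mathlib


open Matrix

/-- For a positive recurrent level-independent QBD with matrix-geometric stationary vector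
x_k = x₁R^{k-1}, with Φ₀ = (A₀ + A₁) + RA₂ invertible, one has
x₀B₀(−Φ₀⁻¹) = x₁(I − R)⁻¹, equivalently x₁ = x₀B₀(−Φ₀⁻¹)(I − R). -/
theorem stmt5 (m0 m : ℕ)
    (B1 : Matrix (Fin m0) (Fin m0) ℝ) (B0 : Matrix (Fin m0) (Fin m) ℝ)
    (B2 : Matrix (Fin m) (Fin m0) ℝ) (A0 A1 A2 R : Matrix (Fin m) (Fin m) ℝ)
    (hRsol : A0 + R * A1 + R ^ 2 * A2 = 0)
    (hsp : ∀ z ∈ spectrum ℂ (R.map (algebraMap ℝ ℂ)), ‖z‖ < 1)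
    (x0 : Fin m0 → ℝ) (x : ℕ → Fin m → ℝ)
    (hx0 : ∀ i, 0 ≤ x0 i) (hxpos : ∀ k i, 0 ≤ x k i)
    (hsum : Summable x)
    (hgeo : ∀ k, 2 ≤ k → x k = x 1 ᵥ* R ^ (k - 1))
    (hbal0 : x0 ᵥ* B1 + x 1 ᵥ* B2 = 0)
    (hbal1 : x0 ᵥ* B0 + x 1 ᵥ* A1 + x 2 ᵥ* A2 = 0)
    (hbalk : ∀ k, 2 ≤ k → x (k - 1) ᵥ* A0 + x k ᵥ* A1 + x (k + 1) ᵥ* A2 = 0)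
    (Φ0 : Matrix (Fin m) (Fin m) ℝ) (hΦ0 : Φ0 = (A0 + A1) + R * A2)
    (hinv : IsUnit Φ0) :
    x0 ᵥ* (B0 * (-Φ0⁻¹)) = x 1 ᵥ* (1 - R)⁻¹ ∧
      x 1 = x0 ᵥ* (B0 * (-Φ0⁻¹) * (1 - R)) := by
  -- I - R is invertible because the spectral radius of R is < 1
  have hIR : IsUnit (1 - R) := by
    by_contra h
    have hdet0 : (1 - R).det = 0 := by
      by_contra hd
      exact h ((1 - R).isUnit_iff_isUnit_det.mpr (isUnit_iff_ne_zero.mpr hd))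
    have hmem : (1 : ℂ) ∈ spectrum ℂ (R.map (algebraMap ℝ ℂ)) := by
      rw [spectrum.mem_iff]
      intro hu
      have h1 : algebraMap ℂ (Matrix (Fin m) (Fin m) ℂ) 1 - R.map (algebraMap ℝ ℂ)
          = (1 - R).map (algebraMap ℝ ℂ) := by
        ext i j
        simp [Matrix.algebraMap_matrix_apply, Matrix.map_apply, Matrix.sub_apply,
          Matrix.one_apply]
        split <;> simp
      rw [h1] at hu
      have hdu := hu.map (Matrix.detMonoidHom)
      rw [Matrix.coe_detMonoidHom, ← RingHom.mapMatrix_apply,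
        ← RingHom.map_det, hdet0, map_zero] at hdu
      exact (isUnit_iff_ne_zero.mp hdu) rfl
    have := hsp 1 hmem
    norm_num at this
  have hdetIR : IsUnit (1 - R).det := (isUnit_iff_isUnit_det _).mp hIR
  have hdetΦ : IsUnit Φ0.det := (isUnit_iff_isUnit_det _).mp hinv
  -- key algebraic identity
  have hkey : (1 - R) * (A1 + R * A2) = Φ0 := by
    have hA0 : A0 = -(R * A1 + R ^ 2 * A2) := by
      rw [add_assoc] at hRsol
      exact eq_neg_of_add_eq_zero_left hRsol
    rw [hΦ0, hA0]
    noncomm_ring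
  have hfac : A1 + R * A2 = (1 - R)⁻¹ * Φ0 := by
    rw [← hkey, ← Matrix.mul_assoc, Matrix.nonsing_inv_mul _ hdetIR, Matrix.one_mul]
  have h2 : x 2 = x 1 ᵥ* R := by
    have := hgeo 2 le_rfl
    simpa using this
  have hB0 : x0 ᵥ* B0 = -(x 1 ᵥ* (A1 + R * A2)) := by
    have : x0 ᵥ* B0 + x 1 ᵥ* (A1 + R * A2) = 0 := by
      rw [Matrix.vecMul_add, ← Matrix.vecMul_vecMul, ← h2, ← add_assoc]
      exact hbal1
    exact eq_neg_of_add_eq_zero_left this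
  have hmain : x0 ᵥ* (B0 * (-Φ0⁻¹)) = x 1 ᵥ* (1 - R)⁻¹ := by
    have hsimp : (1 - R)⁻¹ * Φ0 * Φ0⁻¹ = (1 - R)⁻¹ := by
      rw [Matrix.mul_assoc, Matrix.mul_nonsing_inv _ hdetΦ, Matrix.mul_one]
    rw [← Matrix.vecMul_vecMul, hB0, hfac, Matrix.neg_vecMul, Matrix.vecMul_neg, neg_neg,
      Matrix.vecMul_vecMul, hsimp]
  refine ⟨hmain, ?_⟩
  rw [← Matrix.vecMul_vecMul, hmain, Matrix.vecMul_vecMul,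
    Matrix.nonsing_inv_mul _ hdetIR, Matrix.vecMul_one]
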